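/- arXiv:1701.00273 — 3 statements merged into one kernel-verified Lean document; each statement's English description precedes it below -/
import Mathlib

section
/- Almost surely, f(X_{Δ,T}) = E[f(X_{Δ,T})] + Σ_{j=1}^{J} Σ_{r=1}^{m} Σ_{1≤s_1<…<s_r≤m} a_{j,r,s}(X_{Δ,(j−1)Δ}) ∏_{i=1}^{r} ξ_j^{s_i}; moreover E[f(X_{Δ,T})] = q_0(x_0). -/
/-!
Expanding `y ↦ q_j(Φ(x, y))` in the Walsh basis `y ↦ ∏_{i∈S} yⁱ` of functions on `{-1, 1}^m`,
the constant coefficient is `q_{j-1}(x)` and the others are the `a_{j,S}(x)`. On the almost sure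
event where every coin is `±1`, `q_j(X_{jΔ}) - q_{j-1}(X_{(j-1)Δ})` is therefore the `j`-th
increment, and `f(X_T) - q_0(x_0)` telescopes into their sum. Each term of an increment has mean
zero: `a_{j,S}(X_{(j-1)Δ}) ∏_{i∈S∖{i₀}} ξ_jⁱ` is independent of the centred coin `ξ_j^{i₀}`.
All these terms are integrable because the scheme takes finitely many values.
-/

open MeasureTheory ProbabilityTheory Finset

noncomputable section

/-- Map a boolean to `±1`. -/
def pm (b : Bool) : ℝ := if b then 1 else -1

/-- Law of a fair `±1` coin: `P(1) = P(-1) = 1/2`. -/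
def coinLaw : Measure ℝ :=
  (1 / 2 : ENNReal) • Measure.dirac (1 : ℝ) + (1 / 2 : ENNReal) • Measure.dirac (-1 : ℝ)

/-- Backward recursion: `qA Φ f k = q_{J-k}`, i.e. `qA Φ f 0 = q_J = f` and
`q_{j-1}(x) = 2^{-m} Σ_{y ∈ {-1,1}^m} q_j(Φ x y)`. -/
def qA {d m : ℕ} (Φ : (Fin d → ℝ) → (Fin m → ℝ) → Fin d → ℝ)
    (f : (Fin d → ℝ) → ℝ) : ℕ → (Fin d → ℝ) → ℝ
  | 0 => f
  | k + 1 => fun x =>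
      ((2 : ℝ) ^ m)⁻¹ * ∑ b : Fin m → Bool, qA Φ f k (Φ x fun i => pm (b i))

/-- Coefficient `a_{j,r,s}` with `k = J - j`, encoding the strictly increasing tuple
`1 ≤ s_1 < … < s_r ≤ m` as the (nonempty) subset `S = {s_1,…,s_r} ⊆ {1,…,m}`:
`a_{j,S}(x) = 2^{-m} Σ_{y ∈ {-1,1}^m} (Π_{i∈S} y^i) q_j(Φ x y)`. -/
def aA {d m : ℕ} (Φ : (Fin d → ℝ) → (Fin m → ℝ) → Fin d → ℝ)
    (f : (Fin d → ℝ) → ℝ) (k : ℕ) (S : Finset (Fin m)) (x : Fin d → ℝ) : ℝ :=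
  ((2 : ℝ) ^ m)⁻¹ *
    ∑ b : Fin m → Bool, (∏ i ∈ S, pm (b i)) * qA Φ f k (Φ x fun i => pm (b i))

/-- The discretisation scheme: `XA Φ x0 ξ 0 = x0`,
`XA Φ x0 ξ j = Φ (XA Φ x0 ξ (j-1)) ξ_j`. -/
def XA {d m : ℕ} {Ω : Type*} (Φ : (Fin d → ℝ) → (Fin m → ℝ) → Fin d → ℝ)
    (x0 : Fin d → ℝ) (ξ : ℕ → Ω → Fin m → ℝ) : ℕ → Ω → Fin d → ℝ
  | 0 => fun _ => x0
  | j + 1 => fun ω => Φ (XA Φ x0 ξ j ω) (ξ (j + 1) ω)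

lemma pm_mul_pm_add_one (b c : Bool) : pm b * pm c + 1 = if b = c then 2 else 0 := by
  cases b <;> cases c <;> norm_num [pm]

lemma sum_prod_pm_mul_pm {m : ℕ} (b c : Fin m → Bool) :
    ∑ S : Finset (Fin m), ∏ i ∈ S, pm (b i) * pm (c i) = if b = c then 2 ^ m else 0 := by
  rw [← Finset.powerset_univ, ← Finset.prod_add_one]
  simp only [pm_mul_pm_add_one, Finset.prod_ite_zero, Finset.prod_const, Finset.card_univ,
    Fintype.card_fin, Finset.mem_univ, true_implies, funext_iff]

theorem sum_walsh_coeff_mul_prod {m : ℕ} (g : (Fin m → Bool) → ℝ) (c : Fin m → Bool) :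
    ∑ S : Finset (Fin m),
      ((2 : ℝ) ^ m)⁻¹ * (∑ b, (∏ i ∈ S, pm (b i)) * g b) * ∏ i ∈ S, pm (c i) = g c := by
  calc _ = ((2 : ℝ) ^ m)⁻¹ * ∑ b, g b * ∑ S : Finset (Fin m), ∏ i ∈ S, pm (b i) * pm (c i) := by
        simp only [Finset.mul_sum, Finset.sum_mul, Finset.prod_mul_distrib]
        rw [Finset.sum_comm]
        exact Finset.sum_congr rfl fun _ _ => Finset.sum_congr rfl fun _ _ => by ring
    _ = g c := by simp [sum_prod_pm_mul_pm]; field_simp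

def signVectors (m : ℕ) : Finset (Fin m → ℝ) := Fintype.piFinset fun _ => {1, -1}

lemma exists_pm_of_mem_signVectors {m : ℕ} {y : Fin m → ℝ} (hy : y ∈ signVectors m) :
    ∃ c : Fin m → Bool, (fun i => pm (c i)) = y := by
  refine ⟨fun i => decide (y i = 1), funext fun i => ?_⟩
  have := Fintype.mem_piFinset.1 hy i
  simp only [Finset.mem_insert, Finset.mem_singleton] at this
  rcases this with h | h <;> norm_num [pm, h]

lemma abs_prod_eq_one_of_mem_signVectors {m : ℕ} {y : Fin m → ℝ} (hy : y ∈ signVectors m)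
    (S : Finset (Fin m)) : |∏ i ∈ S, y i| = 1 := by
  obtain ⟨c, rfl⟩ := exists_pm_of_mem_signVectors hy
  rw [Finset.abs_prod]
  exact Finset.prod_eq_one fun i _ => by cases c i <;> norm_num [pm]

section Scheme

variable {d m : ℕ} (Φ : (Fin d → ℝ) → (Fin m → ℝ) → Fin d → ℝ) (f : (Fin d → ℝ) → ℝ)

lemma aA_empty (k : ℕ) (x : Fin d → ℝ) : aA Φ f k ∅ x = qA Φ f (k + 1) x := by
  simp [aA, qA]

theorem qA_apply_eq_add_sum (k : ℕ) (x : Fin d → ℝ) {y : Fin m → ℝ} (hy : y ∈ signVectors m) :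
    qA Φ f k (Φ x y) = qA Φ f (k + 1) x +
      ∑ S ∈ (Finset.univ : Finset (Finset (Fin m))).filter (fun S => S.Nonempty),
        aA Φ f k S x * ∏ i ∈ S, y i := by
  obtain ⟨c, rfl⟩ := exists_pm_of_mem_signVectors hy
  have hempty : (Finset.univ : Finset (Finset (Fin m))).filter (fun S => ¬S.Nonempty) = {∅} := by
    ext S; simp [Finset.not_nonempty_iff_eq_empty]
  calc _ = ∑ S, aA Φ f k S x * ∏ i ∈ S, pm (c i) :=
        (sum_walsh_coeff_mul_prod (fun b => qA Φ f k (Φ x fun i => pm (b i))) c).symm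
    _ = _ := by
        rw [← Finset.sum_filter_not_add_sum_filter _ (fun S => S.Nonempty), hempty,
          Finset.sum_singleton, aA_empty, Finset.prod_empty, mul_one]

theorem measurable_qA (hΦ : Measurable fun p : (Fin d → ℝ) × (Fin m → ℝ) => Φ p.1 p.2)
    (hf : Measurable f) (k : ℕ) : Measurable (qA Φ f k) := by
  induction k with
  | zero => exact hf
  | succ k ih =>
    exact (Finset.measurable_sum _ fun b _ =>
      ih.comp (hΦ.comp (measurable_id.prodMk measurable_const))).const_mul _

theorem measurable_aA (hΦ : Measurable fun p : (Fin d → ℝ) × (Fin m → ℝ) => Φ p.1 p.2)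
    (hf : Measurable f) (k : ℕ) (S : Finset (Fin m)) : Measurable (aA Φ f k S) :=
  (Finset.measurable_sum _ fun _ _ => ((measurable_qA Φ f hΦ hf k).comp
    (hΦ.comp (measurable_id.prodMk measurable_const))).const_mul _).const_mul _

variable (x0 : Fin d → ℝ)

def reachable : ℕ → Finset (Fin d → ℝ)
  | 0 => {x0}
  | n + 1 => (reachable n ×ˢ signVectors m).image fun p => Φ p.1 p.2

variable {Ω : Type*} (ξ : ℕ → Ω → Fin m → ℝ)

theorem XA_mem_reachable {ω : Ω} (hω : ∀ j, ξ j ω ∈ signVectors m) (n : ℕ) :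
    XA Φ x0 ξ n ω ∈ reachable Φ x0 n := by
  induction n with
  | zero => exact Finset.mem_singleton_self x0
  | succ n ih => exact Finset.mem_image_of_mem _ (Finset.mk_mem_product ih (hω (n + 1)))

theorem qA_XA_eq_add_sum {ω : Ω} (hω : ∀ j, ξ j ω ∈ signVectors m) {J n : ℕ} (hn : n ≤ J) :
    qA Φ f (J - n) (XA Φ x0 ξ n ω) = qA Φ f J x0 +
      ∑ j ∈ Finset.Icc 1 n,
        ∑ S ∈ (Finset.univ : Finset (Finset (Fin m))).filter (fun S => S.Nonempty),
          aA Φ f (J - j) S (XA Φ x0 ξ (j - 1) ω) * ∏ i ∈ S, ξ j ω i := by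
  induction n with
  | zero => simp [XA]
  | succ n ih =>
    have hJ : J - (n + 1) + 1 = J - n := by omega
    rw [XA, qA_apply_eq_add_sum Φ f _ _ (hω (n + 1)), hJ, ih (by omega),
      Finset.sum_Icc_succ_top (by omega), add_assoc, Nat.add_sub_cancel]

end Scheme

theorem ae_mem_coinLaw : ∀ᵐ x ∂coinLaw, x ∈ ({1, -1} : Finset ℝ) := by
  simp [coinLaw, ae_dirac_eq]

theorem integral_id_coinLaw : ∫ x, x ∂coinLaw = 0 := by
  have hint (c : ℝ) : Integrable (fun x : ℝ => x) ((1 / 2 : ENNReal) • Measure.dirac c) :=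
    (integrable_dirac (by simp)).smul_measure (by simp)
  unfold coinLaw
  rw [integral_add_measure (hint 1) (hint (-1))]
  simp

theorem ProbabilityTheory.iIndepFun.indepFun_of_measurable_iSup {Ω ι β γ : Type*}
    [MeasurableSpace Ω] [MeasurableSpace β] [MeasurableSpace γ] {P : Measure Ω}
    {Y : ι → Ω → β} (hY : ∀ i, Measurable (Y i)) (h : iIndepFun Y P) {A : Set ι} {i₀ : ι}
    (hi₀ : i₀ ∉ A) {G : Ω → γ}
    (hG : Measurable[⨆ i ∈ A, MeasurableSpace.comap (Y i) inferInstance] G) :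
    IndepFun G (Y i₀) P := by
  rw [IndepFun_iff_Indep]
  have := indep_iSup_of_disjoint (fun i => (hY i).comap_le) h.iIndep
    (Set.disjoint_singleton_right.2 hi₀)
  exact indep_of_indep_of_le_right (indep_of_indep_of_le_left this hG.comap_le)
    (le_iSup₂ (f := fun i (_ : i ∈ ({i₀} : Set ι)) => MeasurableSpace.comap (Y i) inferInstance)
      i₀ rfl)

section Coins

variable {d m : ℕ} {Ω : Type*} (ξ : ℕ → Ω → Fin m → ℝ)

abbrev coinSigma (A : Set (ℕ × Fin m)) : MeasurableSpace Ω :=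
  ⨆ p ∈ A, MeasurableSpace.comap (fun ω => ξ p.1 ω p.2) inferInstance

variable {ξ}

theorem measurable_coinSigma_coord {A : Set (ℕ × Fin m)} {p : ℕ × Fin m} (hp : p ∈ A) :
    Measurable[coinSigma ξ A] fun ω => ξ p.1 ω p.2 :=
  (comap_measurable _).mono (le_iSup₂ (f := fun p (_ : p ∈ A) =>
    MeasurableSpace.comap (fun ω => ξ p.1 ω p.2) inferInstance) p hp) le_rfl

theorem measurable_XA_coinSigma (Φ : (Fin d → ℝ) → (Fin m → ℝ) → Fin d → ℝ)
    (hΦ : Measurable fun p : (Fin d → ℝ) × (Fin m → ℝ) => Φ p.1 p.2) (x0 : Fin d → ℝ)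
    {A : Set (ℕ × Fin m)} {n : ℕ} (hA : ∀ k ≤ n, ∀ i, (k, i) ∈ A) :
    Measurable[coinSigma ξ A] (XA Φ x0 ξ n) := by
  induction n with
  | zero => exact measurable_const
  | succ n ih =>
    let := coinSigma ξ A
    have hcoin : Measurable (ξ (n + 1)) :=
      measurable_pi_iff.2 fun i => measurable_coinSigma_coord (p := (n + 1, i)) (hA _ le_rfl i)
    exact hΦ.comp ((ih fun k hk => hA k (by omega)).prodMk hcoin)

variable [MeasurableSpace Ω]

theorem measurable_coord (hξ : ∀ j, Measurable (ξ j)) (p : ℕ × Fin m) :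
    Measurable fun ω => ξ p.1 ω p.2 :=
  (measurable_pi_apply p.2).comp (hξ p.1)

theorem coinSigma_le (hξ : ∀ j, Measurable (ξ j)) (A : Set (ℕ × Fin m)) :
    coinSigma ξ A ≤ ‹MeasurableSpace Ω› :=
  iSup₂_le fun p _ => (measurable_coord hξ p).comap_le

variable {P : Measure Ω}

theorem ae_forall_mem_signVectors (hξ : ∀ j, Measurable (ξ j))
    (hdist : ∀ j k, Measure.map (fun ω => ξ j ω k) P = coinLaw) :
    ∀ᵐ ω ∂P, ∀ j, ξ j ω ∈ signVectors m := by
  simp only [signVectors, Fintype.mem_piFinset, ae_all_iff]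
  intro j i
  have := ae_mem_coinLaw
  rw [← hdist j i] at this
  exact ae_of_ae_map (measurable_coord hξ (j, i)).aemeasurable this

theorem integral_coord_eq_zero (hξ : ∀ j, Measurable (ξ j))
    (hdist : ∀ j k, Measure.map (fun ω => ξ j ω k) P = coinLaw) (j : ℕ) (i : Fin m) :
    ∫ ω, ξ j ω i ∂P = 0 := by
  have := integral_map (μ := P) (measurable_coord hξ (j, i)).aemeasurable
    (aestronglyMeasurable_id (α := ℝ))
  simpa [hdist, integral_id_coinLaw] using this.symm

variable (Φ : (Fin d → ℝ) → (Fin m → ℝ) → Fin d → ℝ) (f : (Fin d → ℝ) → ℝ) (x0 : Fin d → ℝ)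

theorem integrable_aA_mul_prod [IsFiniteMeasure P] (hξ : ∀ j, Measurable (ξ j))
    (hdist : ∀ j k, Measure.map (fun ω => ξ j ω k) P = coinLaw)
    (hΦ : Measurable fun p : (Fin d → ℝ) × (Fin m → ℝ) => Φ p.1 p.2) (hf : Measurable f)
    (k j : ℕ) (S : Finset (Fin m)) :
    Integrable (fun ω => aA Φ f k S (XA Φ x0 ξ (j - 1) ω) * ∏ i ∈ S, ξ j ω i) P := by
  have hXA : Measurable (XA Φ x0 ξ (j - 1)) :=
    (measurable_XA_coinSigma Φ hΦ x0 (A := Set.univ) fun _ _ _ => trivial).mono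
      (coinSigma_le hξ _) le_rfl
  have hmeas : Measurable fun ω => aA Φ f k S (XA Φ x0 ξ (j - 1) ω) * ∏ i ∈ S, ξ j ω i :=
    ((measurable_aA Φ f hΦ hf k S).comp hXA).mul
      (Finset.measurable_prod _ fun i _ => measurable_coord hξ (j, i))
  refine .of_bound hmeas.aestronglyMeasurable (∑ v ∈ reachable Φ x0 (j - 1), |aA Φ f k S v|) ?_
  filter_upwards [ae_forall_mem_signVectors hξ hdist] with ω hω
  rw [Real.norm_eq_abs, abs_mul, abs_prod_eq_one_of_mem_signVectors (hω j), mul_one]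
  exact Finset.single_le_sum (f := fun v => |aA Φ f k S v|) (fun _ _ => abs_nonneg _)
    (XA_mem_reachable Φ x0 ξ hω _)

theorem integral_aA_mul_prod_eq_zero [IsProbabilityMeasure P] (hξ : ∀ j, Measurable (ξ j))
    (hindep : iIndepFun (fun p : ℕ × Fin m => fun ω => ξ p.1 ω p.2) P)
    (hdist : ∀ j k, Measure.map (fun ω => ξ j ω k) P = coinLaw)
    (hΦ : Measurable fun p : (Fin d → ℝ) × (Fin m → ℝ) => Φ p.1 p.2) (hf : Measurable f)
    (k : ℕ) {j : ℕ} (hj : 1 ≤ j) {S : Finset (Fin m)} (hS : S.Nonempty) :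
    ∫ ω, aA Φ f k S (XA Φ x0 ξ (j - 1) ω) * ∏ i ∈ S, ξ j ω i ∂P = 0 := by
  obtain ⟨i₀, hi₀⟩ := hS
  -- The past of the scheme and the other coordinates of `ξ j` are independent of `ξ j i₀`.
  let A : Set (ℕ × Fin m) := {p | p.1 < j ∨ p.1 = j ∧ p.2 ∈ S.erase i₀}
  let G : Ω → ℝ := fun ω => aA Φ f k S (XA Φ x0 ξ (j - 1) ω) * ∏ i ∈ S.erase i₀, ξ j ω i
  have hG : Measurable[coinSigma ξ A] G :=
    ((measurable_aA Φ f hΦ hf k S).comp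
      (measurable_XA_coinSigma Φ hΦ x0 fun k hk _ => Or.inl (by omega))).mul
      (Finset.measurable_prod _ fun i hi =>
        measurable_coinSigma_coord (p := (j, i)) (Or.inr ⟨rfl, hi⟩))
  have hindepG : IndepFun G (fun ω => ξ j ω i₀) P :=
    hindep.indepFun_of_measurable_iSup (measurable_coord hξ) (i₀ := (j, i₀)) (by simp [A]) hG
  calc _ = ∫ ω, G ω * ξ j ω i₀ ∂P := by
        congr 1; funext ω; rw [← Finset.mul_prod_erase S _ hi₀]; ring
    _ = 0 := by
      rw [hindepG.integral_fun_mul_eq_mul_integral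
        (hG.mono (coinSigma_le hξ A) le_rfl).aestronglyMeasurable
        (measurable_coord hξ (j, i₀)).aestronglyMeasurable,
        integral_coord_eq_zero hξ hdist, mul_zero]

end Coins

theorem stmt0_general
    {d m : ℕ} (x0 : Fin d → ℝ) (J : ℕ)
    {Ω : Type*} [MeasurableSpace Ω] (P : Measure Ω) [IsProbabilityMeasure P]
    (ξ : ℕ → Ω → Fin m → ℝ) (hξmeas : ∀ j, Measurable (ξ j))
    (hindep : iIndepFun
      (fun p : ℕ × Fin m => fun ω => ξ p.1 ω p.2) P)
    (hdist : ∀ j k, Measure.map (fun ω => ξ j ω k) P = coinLaw)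
    (Φ : (Fin d → ℝ) → (Fin m → ℝ) → Fin d → ℝ)
    (hΦ : Measurable fun p : (Fin d → ℝ) × (Fin m → ℝ) => Φ p.1 p.2)
    (f : (Fin d → ℝ) → ℝ) (hf : Measurable f) :
    (∀ᵐ ω ∂P, f (XA Φ x0 ξ J ω)
        = (∫ ω', f (XA Φ x0 ξ J ω') ∂P)
          + ∑ j ∈ Finset.Icc 1 J,
              ∑ S ∈ (Finset.univ : Finset (Finset (Fin m))).filter (fun S => S.Nonempty),
                aA Φ f (J - j) S (XA Φ x0 ξ (j - 1) ω) * ∏ i ∈ S, ξ j ω i)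
      ∧ (∫ ω', f (XA Φ x0 ξ J ω') ∂P) = qA Φ f J x0 := by
  have htel : ∀ᵐ ω ∂P, f (XA Φ x0 ξ J ω) = qA Φ f J x0 +
      ∑ j ∈ Finset.Icc 1 J,
        ∑ S ∈ (Finset.univ : Finset (Finset (Fin m))).filter (fun S => S.Nonempty),
          aA Φ f (J - j) S (XA Φ x0 ξ (j - 1) ω) * ∏ i ∈ S, ξ j ω i := by
    filter_upwards [ae_forall_mem_signVectors hξmeas hdist] with ω hω
    simpa only [Nat.sub_self, qA] using qA_XA_eq_add_sum Φ f x0 ξ hω le_rfl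
  have hint j S := integrable_aA_mul_prod Φ f x0 hξmeas hdist hΦ hf (J - j) j S
  have hmean : ∫ ω, f (XA Φ x0 ξ J ω) ∂P = qA Φ f J x0 := by
    rw [integral_congr_ae htel, integral_add (integrable_const _)
        (integrable_finsetSum _ fun j _ => integrable_finsetSum _ fun S _ => hint j S),
      integral_finsetSum _ fun j _ => integrable_finsetSum _ fun S _ => hint j S]
    simp only [integral_finsetSum _ fun S _ => hint _ S]
    rw [Finset.sum_eq_zero fun j hj => Finset.sum_eq_zero fun S hS =>
      integral_aA_mul_prod_eq_zero Φ f x0 hξmeas hindep hdist hΦ hf (J - j)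
        (Finset.mem_Icc.1 hj).1 (Finset.mem_filter.1 hS).2]
    simp
  exact ⟨by filter_upwards [htel] with ω h; rw [hmean, h], hmean⟩

/-- Almost surely,
`f(X_{Δ,T}) = E[f(X_{Δ,T})] + Σ_{j=1}^J Σ_{∅ ≠ S ⊆ {1,…,m}} a_{j,S}(X_{Δ,(j-1)Δ}) Π_{i∈S} ξ_j^i`,
and moreover `E[f(X_{Δ,T})] = q_0(x_0)`. -/
theorem stmt0
    {d m : ℕ} (T : ℝ) (hT : 0 < T) (x0 : Fin d → ℝ) (J : ℕ) (hJ : 1 ≤ J)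
    {Ω : Type*} [MeasurableSpace Ω] (P : Measure Ω) [IsProbabilityMeasure P]
    (ξ : ℕ → Ω → Fin m → ℝ) (hξmeas : ∀ j, Measurable (ξ j))
    (hindep : iIndepFun
      (fun p : ℕ × Fin m => fun ω => ξ p.1 ω p.2) P)
    (hdist : ∀ j k, Measure.map (fun ω => ξ j ω k) P = coinLaw)
    (Φ : (Fin d → ℝ) → (Fin m → ℝ) → Fin d → ℝ)
    (hΦ : Measurable fun p : (Fin d → ℝ) × (Fin m → ℝ) => Φ p.1 p.2)
    (f : (Fin d → ℝ) → ℝ) (hf : Measurable f) :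
    (∀ᵐ ω ∂P, f (XA Φ x0 ξ J ω)
        = (∫ ω', f (XA Φ x0 ξ J ω') ∂P)
          + ∑ j ∈ Finset.Icc 1 J,
              ∑ S ∈ (Finset.univ : Finset (Finset (Fin m))).filter (fun S => S.Nonempty),
                aA Φ f (J - j) S (XA Φ x0 ξ (j - 1) ω) * ∏ i ∈ S, ξ j ω i)
      ∧ (∫ ω', f (XA Φ x0 ξ J ω') ∂P) = qA Φ f J x0 :=
  stmt0_general x0 J P ξ hξmeas hindep hdist Φ hΦ f hf

end
end

section
/- The control variate M^{(1)}_{Δ,T} := Σ_{j=1}^{J} Σ_{r=1}^{m} Σ_{1≤s_1<…<s_r≤m} a_{j,r,s}(X_{Δ,(j−1)Δ}) ∏_{i=1}^{r} ξ_j^{s_i} satisfies Var[f(X_{Δ,T}) − M^{(1)}_{Δ,T}] = 0. -/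
open MeasureTheory ProbabilityTheory Finset

noncomputable section

/-!
For fixed `x`, the Walsh functions `y ↦ ∏_{i ∈ S} y^i`, `S ⊆ {1,…,m}`, form an orthogonal basis
of the real functions on `{±1}^m`, and the expansion of `y ↦ q_j(Φ_Δ(x, y))` in this basis has
constant term `q_{j-1}(x)` and coefficients `a_{j,S}(x)`. Hence on every path whose increments
lie in `{±1}^m`, the `j`-th summand of `M^{(1)}` is exactly `q_j(X_{jΔ}) - q_{j-1}(X_{(j-1)Δ})`,
so `M^{(1)}` telescopes to `f(X_T) - q_0(x_0)` and `f(X_T) - M^{(1)}` is almost surely constant.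
-/

def walsh {ι : Type*} (S : Finset ι) (b : ι → Bool) : ℝ := ∏ i ∈ S, pm (b i)

section Walsh

variable {ι : Type*} [Fintype ι]

theorem sum_walsh_mul_walsh (b c : ι → Bool) :
    ∑ S : Finset ι, walsh S b * walsh S c = if b = c then (2 : ℝ) ^ Fintype.card ι else 0 := by
  have hpm : ∀ i, pm (b i) * pm (c i) + 1 = if b i = c i then 2 else 0 := by
    intro i
    cases b i <;> cases c i <;> norm_num [pm]
  simp only [walsh, ← prod_mul_distrib]
  rw [← powerset_univ, ← prod_add_one, prod_congr rfl fun i _ => hpm i]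
  split_ifs with hbc
  · simp [hbc]
  · obtain ⟨i, hi⟩ := Function.ne_iff.mp hbc
    exact prod_eq_zero (mem_univ i) (if_neg hi)

theorem walsh_inversion [DecidableEq ι] (g : (ι → Bool) → ℝ) (c : ι → Bool) :
    ∑ S : Finset ι,
        (((2 : ℝ) ^ Fintype.card ι)⁻¹ * ∑ b, walsh S b * g b) * walsh S c = g c := by
  calc ∑ S : Finset ι, (((2 : ℝ) ^ Fintype.card ι)⁻¹ * ∑ b, walsh S b * g b) * walsh S c
      = ((2 : ℝ) ^ Fintype.card ι)⁻¹ * ∑ b, g b * ∑ S : Finset ι, walsh S b * walsh S c := by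
        simp only [mul_sum, sum_mul]
        rw [sum_comm]
        refine sum_congr rfl fun b _ => sum_congr rfl fun S _ => by ring
    _ = g c := by
        simp only [sum_walsh_mul_walsh, mul_ite, mul_zero, sum_ite_eq', mem_univ, ↓reduceIte]
        field_simp

end Walsh

theorem ae_eq_one_or_neg_one_of_map_eq_coinLaw {Ω : Type*} [MeasurableSpace Ω] {P : Measure Ω}
    {Y : Ω → ℝ} (hY : P.map Y = coinLaw) : ∀ᵐ ω ∂P, Y ω = 1 ∨ Y ω = -1 := by
  have hcoin : ∀ᵐ y ∂coinLaw, y = 1 ∨ y = -1 := by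
    rw [coinLaw, ae_add_measure_iff]
    exact ⟨Measure.ae_smul_measure (by simp [ae_dirac_eq]) _,
      Measure.ae_smul_measure (by simp [ae_dirac_eq]) _⟩
  have hY_ne : P.map Y ≠ 0 := by
    rw [hY]
    intro h
    simpa [coinLaw] using congrArg (· Set.univ) h
  rw [← hY] at hcoin
  exact ae_of_ae_map (.of_map_ne_zero hY_ne) hcoin

section Scheme

variable {d m : ℕ} (Φ : (Fin d → ℝ) → (Fin m → ℝ) → Fin d → ℝ) (f : (Fin d → ℝ) → ℝ)

theorem qA_succ_add_sum_aA_mul (k : ℕ) (x : Fin d → ℝ) {v : Fin m → ℝ}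
    (hv : ∀ i, v i = 1 ∨ v i = -1) :
    qA Φ f (k + 1) x + ∑ S ∈ (univ : Finset (Finset (Fin m))).filter (fun S => S.Nonempty),
        aA Φ f k S x * ∏ i ∈ S, v i
      = qA Φ f k (Φ x v) := by
  obtain ⟨c, rfl⟩ : ∃ c : Fin m → Bool, v = fun i => pm (c i) :=
    ⟨fun i => v i = 1, funext fun i => by rcases hv i with h | h <;> norm_num [pm, h]⟩
  have hexpand :
      ∑ S : Finset (Fin m), aA Φ f k S x * walsh S c = qA Φ f k (Φ x fun i => pm (c i)) := by
    have := walsh_inversion (fun b => qA Φ f k (Φ x fun i => pm (b i))) c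
    rwa [Fintype.card_fin] at this
  have hmean : aA Φ f k ∅ x * walsh ∅ c = qA Φ f (k + 1) x := by
    simp [aA, qA, walsh]
  rw [← hexpand, ← add_sum_erase univ _ (mem_univ ∅), hmean]
  simp_rw [nonempty_iff_ne_empty, filter_ne']
  rfl

theorem qA_add_sum_Icc_aA_mul {Ω : Type*} (x0 : Fin d → ℝ) (ξ : ℕ → Ω → Fin m → ℝ) (J : ℕ)
    {ω : Ω} (hξ : ∀ j i, ξ j ω i = 1 ∨ ξ j ω i = -1) {n : ℕ} (hn : n ≤ J) :
    qA Φ f J x0 + ∑ j ∈ Icc 1 n,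
        ∑ S ∈ (univ : Finset (Finset (Fin m))).filter (fun S => S.Nonempty),
          aA Φ f (J - j) S (XA Φ x0 ξ (j - 1) ω) * ∏ i ∈ S, ξ j ω i
      = qA Φ f (J - n) (XA Φ x0 ξ n ω) := by
  induction n with
  | zero => simp [XA]
  | succ n ih =>
    rw [sum_Icc_succ_top (by omega), ← add_assoc, ih (by omega),
      show J - n = J - (n + 1) + 1 by omega]
    exact qA_succ_add_sum_aA_mul Φ f _ _ (hξ (n + 1))

end Scheme

theorem stmt2_general
    {d m : ℕ} (x0 : Fin d → ℝ) (J : ℕ)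
    {Ω : Type*} [MeasurableSpace Ω] (P : Measure Ω) [IsProbabilityMeasure P]
    (ξ : ℕ → Ω → Fin m → ℝ)
    (hdist : ∀ j k, Measure.map (fun ω => ξ j ω k) P = coinLaw)
    (Φ : (Fin d → ℝ) → (Fin m → ℝ) → Fin d → ℝ)
    (f : (Fin d → ℝ) → ℝ) :
    variance
      (fun ω => f (XA Φ x0 ξ J ω)
        - ∑ j ∈ Finset.Icc 1 J,
            ∑ S ∈ (Finset.univ : Finset (Finset (Fin m))).filter (fun S => S.Nonempty),
              aA Φ f (J - j) S (XA Φ x0 ξ (j - 1) ω) * ∏ i ∈ S, ξ j ω i) P = 0 := by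
  have hξ : ∀ᵐ ω ∂P, ∀ j i, ξ j ω i = 1 ∨ ξ j ω i = -1 :=
    ae_all_iff.2 fun j => ae_all_iff.2 fun i => ae_eq_one_or_neg_one_of_map_eq_coinLaw (hdist j i)
  rw [variance_congr (Y := fun _ => qA Φ f J x0)]
  · simp [variance, evariance]
  filter_upwards [hξ] with ω hω
  have htelescope := qA_add_sum_Icc_aA_mul Φ f x0 ξ J hω le_rfl
  rw [Nat.sub_self, qA] at htelescope
  linarith

/-- The control variate
`M^{(1)}_{Δ,T} = Σ_{j=1}^J Σ_{∅ ≠ S ⊆ {1,…,m}} a_{j,S}(X_{Δ,(j-1)Δ}) Π_{i∈S} ξ_j^i`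
satisfies `Var[f(X_{Δ,T}) − M^{(1)}_{Δ,T}] = 0`. -/
theorem stmt2
    {d m : ℕ} (T : ℝ) (hT : 0 < T) (x0 : Fin d → ℝ) (J : ℕ) (hJ : 1 ≤ J)
    {Ω : Type*} [MeasurableSpace Ω] (P : Measure Ω) [IsProbabilityMeasure P]
    (ξ : ℕ → Ω → Fin m → ℝ) (hξmeas : ∀ j, Measurable (ξ j))
    (hindep : iIndepFun
      (fun p : ℕ × Fin m => fun ω => ξ p.1 ω p.2) P)
    (hdist : ∀ j k, Measure.map (fun ω => ξ j ω k) P = coinLaw)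
    (Φ : (Fin d → ℝ) → (Fin m → ℝ) → Fin d → ℝ)
    (hΦ : Measurable fun p : (Fin d → ℝ) × (Fin m → ℝ) => Φ p.1 p.2)
    (f : (Fin d → ℝ) → ℝ) (hf : Measurable f) :
    variance
      (fun ω => f (XA Φ x0 ξ J ω)
        - ∑ j ∈ Finset.Icc 1 J,
            ∑ S ∈ (Finset.univ : Finset (Finset (Fin m))).filter (fun S => S.Nonempty),
              aA Φ f (J - j) S (XA Φ x0 ξ (j - 1) ω) * ∏ i ∈ S, ξ j ω i) P = 0 :=
  stmt2_general x0 J P ξ hdist Φ f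

end
end

section
/- Suppose all entries σ^{ki} (k=1,…,d, i=1,…,m) are bounded functions, and f and all entries μ^k, σ^{ki} are continuously differentiable with bounded partial derivatives. Then there exists a constant A>0, depending only on d, m, T, f, μ and σ (in particular independent of J), such that for every J∈ℕ, every j∈{1,…,J}, every r∈{1,…,m} and every 1≤s_1<…<s_r≤m, sup_{x∈ℝ^d} |a_{j,r,s}(x)| ≤ A√Δ. -/
/-!
Write `Φ = PhiE μc σc Δ` and `z = x + μ(x) Δ`. For `S ≠ ∅` the character `∏_{i ∈ S} y^i` averages
to zero over `{-1,1}^m`, so `a_{j,S}(x)` is the average of `χ_S(y) (q_j(Φ x y) - q_j(z))`, and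
`|Φ x y - z|² ≤ Δ d (m C)²` because `σ` is bounded. It remains to show that `q_j` is Lipschitz
uniformly in `J`. For the squared Euclidean distance, one step of the scheme is Lipschitz on
average with constant `1 + cΔ`: the noise `√Δ σ(x) y` enters only through its second moment
`Δ |σ(u) - σ(v)|²`, since the cross terms average out. By Cauchy–Schwarz, averaging preserves such
bounds, so `(q_j u - q_j v)² ≤ M_f (1 + cΔ)^J |u - v|² ≤ M_f e^{cT} |u - v|²`.
-/

open MeasureTheory ProbabilityTheory Finset

noncomputable section

/-- The simplified weak Euler scheme map `Φ_Δ(x,y) = x + μ(x)Δ + σ(x)y√Δ`. -/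
def PhiE {d m : ℕ} (μc : (Fin d → ℝ) → Fin d → ℝ)
    (σc : (Fin d → ℝ) → Fin d → Fin m → ℝ) (Δ : ℝ)
    (x : Fin d → ℝ) (y : Fin m → ℝ) : Fin d → ℝ :=
  fun k => x k + μc x k * Δ + Real.sqrt Δ * ∑ i, σc x k i * y i

/-- `g` is `K` times continuously differentiable with bounded partial derivatives
up to order `K`. -/
def HasBddDerivs {d : ℕ} (K : ℕ) (g : (Fin d → ℝ) → ℝ) : Prop :=
  ContDiff ℝ (K : ℕ∞) g ∧ ∃ C, ∀ i, 1 ≤ i → i ≤ K → ∀ x, ‖iteratedFDeriv ℝ i g x‖ ≤ C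

open Function

lemma pm_not (b : Bool) : pm (!b) = -pm b := by cases b <;> simp [pm]

lemma pm_mul_self (b : Bool) : pm b * pm b = 1 := by cases b <;> norm_num [pm]

lemma abs_pm (b : Bool) : |pm b| = 1 := by cases b <;> norm_num [pm]

section Signs

variable {m : ℕ}

def flipSign (i : Fin m) : Equiv.Perm (Fin m → Bool) :=
  Involutive.toPerm (fun b => update b i (!b i)) fun b => by simp

lemma flipSign_apply (i : Fin m) (b : Fin m → Bool) : flipSign i b = update b i (!b i) := rfl

lemma sum_pm_mul_eq_zero (i : Fin m) {h : (Fin m → Bool) → ℝ}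
    (hh : ∀ b v, h (update b i v) = h b) :
    ∑ b : Fin m → Bool, pm (b i) * h b = 0 := by
  have hflip : ∑ b : Fin m → Bool, pm (b i) * h b = -∑ b : Fin m → Bool, pm (b i) * h b := by
    rw [← Finset.sum_neg_distrib]
    exact (Fintype.sum_equiv (flipSign i) _ _ fun b => by simp [flipSign_apply, pm_not, hh]).symm
  linarith

lemma sum_prod_pm_eq_zero {S : Finset (Fin m)} (hS : S.Nonempty) :
    ∑ b : Fin m → Bool, ∏ i ∈ S, pm (b i) = 0 := by
  obtain ⟨s, hs⟩ := hS
  simp_rw [← Finset.mul_prod_erase S _ hs]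
  exact sum_pm_mul_eq_zero s fun b v => Finset.prod_congr rfl fun i hi => by
    rw [update_of_ne (Finset.ne_of_mem_erase hi)]

lemma sum_pm_mul_pm (i i' : Fin m) :
    ∑ b : Fin m → Bool, pm (b i) * pm (b i') = if i = i' then 2 ^ m else 0 := by
  split_ifs with h
  · subst h
    simp [pm_mul_self]
  · exact sum_pm_mul_eq_zero i fun b v => by rw [update_of_ne (Ne.symm h)]

lemma sum_sum_mul_pm (s : Fin m → ℝ) :
    ∑ b : Fin m → Bool, ∑ i, s i * pm (b i) = 0 := by
  rw [Finset.sum_comm]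
  refine Finset.sum_eq_zero fun i _ => ?_
  simpa [mul_comm] using sum_pm_mul_eq_zero i (h := fun _ => s i) fun _ _ => rfl

lemma sum_sq_sum_mul_pm (s : Fin m → ℝ) :
    ∑ b : Fin m → Bool, (∑ i, s i * pm (b i)) ^ 2 = 2 ^ m * ∑ i, s i ^ 2 := by
  simp_rw [sq, Finset.sum_mul_sum, mul_mul_mul_comm]
  rw [Finset.sum_comm]
  simp_rw [Finset.sum_comm (γ := Fin m → Bool), ← Finset.mul_sum, sum_pm_mul_pm]
  simp [Finset.mul_sum, mul_comm]

lemma sum_sq_add_mul_sum_mul_pm (a c : ℝ) (s : Fin m → ℝ) :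
    ∑ b : Fin m → Bool, (a + c * ∑ i, s i * pm (b i)) ^ 2
      = 2 ^ m * (a ^ 2 + c ^ 2 * ∑ i, s i ^ 2) := by
  have expand : ∀ b : Fin m → Bool, (a + c * ∑ i, s i * pm (b i)) ^ 2
      = a ^ 2 + 2 * a * c * ∑ i, s i * pm (b i) + c ^ 2 * (∑ i, s i * pm (b i)) ^ 2 :=
    fun b => by ring
  simp only [expand, Finset.sum_add_distrib, ← Finset.mul_sum, sum_sum_mul_pm,
    sum_sq_sum_mul_pm]
  simp
  ring

end Signs

section MeanSquareLipschitz

variable {d m : ℕ}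

def sqDist (u v : Fin d → ℝ) : ℝ := ∑ k, (u k - v k) ^ 2

lemma sqDist_nonneg (u v : Fin d → ℝ) : 0 ≤ sqDist u v :=
  Finset.sum_nonneg fun _ _ => sq_nonneg _

lemma norm_sub_sq_le_sqDist (u v : Fin d → ℝ) : ‖u - v‖ ^ 2 ≤ sqDist u v := by
  rw [← Real.le_sqrt (norm_nonneg _) (sqDist_nonneg u v), sqDist]
  refine (pi_norm_le_iff_of_nonneg (Real.sqrt_nonneg _)).2 fun k => ?_
  rw [Pi.sub_apply, Real.norm_eq_abs, ← Real.sqrt_sq_eq_abs]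
  exact Real.sqrt_le_sqrt (Finset.single_le_sum (f := fun k => (u k - v k) ^ 2)
    (fun _ _ => sq_nonneg _) (Finset.mem_univ k))

lemma HasBddDerivs.exists_sq_sub_le {g : (Fin d → ℝ) → ℝ} (hg : HasBddDerivs 1 g) :
    ∃ M ≥ (0 : ℝ), ∀ u v, (g u - g v) ^ 2 ≤ M * sqDist u v := by
  obtain ⟨hsmooth, C, hC⟩ := hg
  have hlip : LipschitzWith C.toNNReal g :=
    lipschitzWith_of_nnnorm_fderiv_le (hsmooth.differentiable one_ne_zero) fun x => by
      rw [← NNReal.coe_le_coe, coe_nnnorm, ← norm_iteratedFDeriv_one]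
      exact (hC 1 le_rfl le_rfl x).trans (Real.le_coe_toNNReal C)
  refine ⟨C.toNNReal ^ 2, sq_nonneg _, fun u v => ?_⟩
  calc (g u - g v) ^ 2 ≤ (C.toNNReal * ‖u - v‖) ^ 2 := by
        rw [← sq_abs, ← Real.dist_eq, ← dist_eq_norm]
        exact pow_le_pow_left₀ dist_nonneg (hlip.dist_le_mul u v) 2
    _ ≤ C.toNNReal ^ 2 * sqDist u v := by
        rw [mul_pow]
        exact mul_le_mul_of_nonneg_left (norm_sub_sq_le_sqDist u v) (sq_nonneg _)

lemma exists_sum_sq_sub_le {ι : Type*} [Fintype ι] {g : ι → (Fin d → ℝ) → ℝ}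
    (hg : ∀ i, HasBddDerivs 1 (g i)) :
    ∃ M ≥ (0 : ℝ), ∀ u v, ∑ i, (g i u - g i v) ^ 2 ≤ M * sqDist u v := by
  choose M hM0 hM using fun i => (hg i).exists_sq_sub_le
  exact ⟨∑ i, M i, Finset.sum_nonneg fun i _ => hM0 i, fun u v => by
    rw [Finset.sum_mul]
    exact Finset.sum_le_sum fun i _ => hM i u v⟩

lemma sq_avg_sub_avg_le {Φ : (Fin d → ℝ) → (Fin m → ℝ) → Fin d → ℝ} {g : (Fin d → ℝ) → ℝ}
    {M K : ℝ} (hM : 0 ≤ M)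
    (hΦ : ∀ u v, ∑ b : Fin m → Bool,
      sqDist (Φ u fun i => pm (b i)) (Φ v fun i => pm (b i)) ≤ 2 ^ m * (K * sqDist u v))
    (hg : ∀ u v, (g u - g v) ^ 2 ≤ M * sqDist u v) (u v : Fin d → ℝ) :
    (((2 : ℝ) ^ m)⁻¹ * ∑ b : Fin m → Bool, g (Φ u fun i => pm (b i))
      - ((2 : ℝ) ^ m)⁻¹ * ∑ b : Fin m → Bool, g (Φ v fun i => pm (b i))) ^ 2
      ≤ M * K * sqDist u v := by
  have hcard : ((Finset.univ : Finset (Fin m → Bool)).card : ℝ) = 2 ^ m := by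
    simp
  have hcs := sq_sum_le_card_mul_sum_sq (s := Finset.univ)
    (f := fun b : Fin m → Bool => g (Φ u fun i => pm (b i)) - g (Φ v fun i => pm (b i)))
  rw [hcard] at hcs
  have hsum : ∑ b : Fin m → Bool, (g (Φ u fun i => pm (b i)) - g (Φ v fun i => pm (b i))) ^ 2
      ≤ 2 ^ m * (M * K * sqDist u v) :=
    calc _ ≤ ∑ b : Fin m → Bool, M * sqDist (Φ u fun i => pm (b i)) (Φ v fun i => pm (b i)) :=
          Finset.sum_le_sum fun b _ => hg _ _
      _ ≤ M * (2 ^ m * (K * sqDist u v)) := by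
          rw [← Finset.mul_sum]
          exact mul_le_mul_of_nonneg_left (hΦ u v) hM
      _ = _ := by ring
  rw [← mul_sub, ← Finset.sum_sub_distrib, mul_pow]
  calc _ ≤ ((2 : ℝ) ^ m)⁻¹ ^ 2 * (2 ^ m * (2 ^ m * (M * K * sqDist u v))) := by
        gcongr
        exact hcs.trans (mul_le_mul_of_nonneg_left hsum (by positivity))
    _ = _ := by field_simp

lemma sq_qA_sub_le {Φ : (Fin d → ℝ) → (Fin m → ℝ) → Fin d → ℝ} {f : (Fin d → ℝ) → ℝ}
    {M K : ℝ} (hM : 0 ≤ M) (hK : 0 ≤ K)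
    (hΦ : ∀ u v, ∑ b : Fin m → Bool,
      sqDist (Φ u fun i => pm (b i)) (Φ v fun i => pm (b i)) ≤ 2 ^ m * (K * sqDist u v))
    (hf : ∀ u v, (f u - f v) ^ 2 ≤ M * sqDist u v) (k : ℕ) (u v : Fin d → ℝ) :
    (qA Φ f k u - qA Φ f k v) ^ 2 ≤ M * K ^ k * sqDist u v := by
  induction k generalizing u v with
  | zero =>
    rw [pow_zero, mul_one]
    exact hf u v
  | succ k ih =>
    rw [pow_succ K k, ← mul_assoc]
    exact sq_avg_sub_avg_le (mul_nonneg hM (pow_nonneg hK k)) hΦ ih u v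

end MeanSquareLipschitz

section Euler

variable {d m : ℕ} {μc : (Fin d → ℝ) → Fin d → ℝ} {σc : (Fin d → ℝ) → Fin d → Fin m → ℝ}

lemma sum_sqDist_phiE_le {Δ Mμ Mσ : ℝ} (hΔ : 0 ≤ Δ)
    (hμ : ∀ u v, ∑ k, (μc u k - μc v k) ^ 2 ≤ Mμ * sqDist u v)
    (hσ : ∀ u v, ∑ k, ∑ i, (σc u k i - σc v k i) ^ 2 ≤ Mσ * sqDist u v) (u v : Fin d → ℝ) :
    ∑ b : Fin m → Bool,
        sqDist (PhiE μc σc Δ u fun i => pm (b i)) (PhiE μc σc Δ v fun i => pm (b i))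
      ≤ 2 ^ m * ((1 + (1 + (1 + Δ) * Mμ + Mσ) * Δ) * sqDist u v) := by
  set A : Fin d → ℝ := fun k => u k - v k + (μc u k - μc v k) * Δ
  have hdiff : ∀ b : Fin m → Bool,
      sqDist (PhiE μc σc Δ u fun i => pm (b i)) (PhiE μc σc Δ v fun i => pm (b i))
        = ∑ k, (A k + √Δ * ∑ i, (σc u k i - σc v k i) * pm (b i)) ^ 2 := fun b => by
    refine Finset.sum_congr rfl fun k _ => ?_
    simp only [PhiE, A, sub_mul, Finset.sum_sub_distrib]
    ring
  have hA : ∑ k, A k ^ 2 ≤ (1 + Δ) * sqDist u v + (Δ + Δ ^ 2) * (Mμ * sqDist u v) := by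
    have hk : ∀ k, A k ^ 2 ≤ (1 + Δ) * (u k - v k) ^ 2 + (Δ + Δ ^ 2) * (μc u k - μc v k) ^ 2 :=
      fun k => by nlinarith [two_mul_le_add_sq (u k - v k) (μc u k - μc v k)]
    calc _ ≤ _ := Finset.sum_le_sum fun k _ => hk k
      _ = (1 + Δ) * sqDist u v + (Δ + Δ ^ 2) * ∑ k, (μc u k - μc v k) ^ 2 := by
        rw [Finset.sum_add_distrib, ← Finset.mul_sum, ← Finset.mul_sum, sqDist]
      _ ≤ _ := by gcongr; exact hμ u v
  simp only [hdiff]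
  rw [Finset.sum_comm]
  simp only [sum_sq_add_mul_sum_mul_pm, ← Finset.mul_sum, Finset.sum_add_distrib,
    Real.sq_sqrt hΔ]
  gcongr
  have := mul_le_mul_of_nonneg_left (hσ u v) hΔ
  nlinarith [sqDist_nonneg u v]

lemma sqDist_phiE_le {C Δ : ℝ} (hΔ : 0 ≤ Δ) (hσ : ∀ x k i, |σc x k i| ≤ C)
    (x : Fin d → ℝ) (b : Fin m → Bool) :
    sqDist (PhiE μc σc Δ x fun i => pm (b i)) (fun k => x k + μc x k * Δ)
      ≤ Δ * (d * (m * C) ^ 2) := by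
  have hk : ∀ k, (PhiE μc σc Δ x (fun i => pm (b i)) k - (x k + μc x k * Δ)) ^ 2
      ≤ Δ * (m * C) ^ 2 := fun k => by
    have hnoise : |∑ i, σc x k i * pm (b i)| ≤ m * C :=
      calc _ ≤ ∑ i, |σc x k i * pm (b i)| := Finset.abs_sum_le_sum_abs _ _
        _ ≤ ∑ _i : Fin m, C := Finset.sum_le_sum fun i _ => by
          rw [abs_mul, abs_pm, mul_one]; exact hσ x k i
        _ = m * C := by simp
    simp only [PhiE, add_sub_cancel_left]
    rw [mul_pow, Real.sq_sqrt hΔ]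
    exact mul_le_mul_of_nonneg_left (sq_le_sq' (abs_le.1 hnoise).1 (abs_le.1 hnoise).2) hΔ
  calc _ ≤ ∑ _k : Fin d, Δ * (m * C) ^ 2 := Finset.sum_le_sum fun k _ => hk k
    _ = _ := by simp; ring

lemma one_add_mul_pow_le_exp {c Δ T : ℝ} (hc : 0 ≤ c) (hΔ : 0 ≤ Δ) {k : ℕ} (hk : k * Δ ≤ T) :
    (1 + c * Δ) ^ k ≤ Real.exp (c * T) :=
  calc _ ≤ Real.exp (c * Δ) ^ k :=
        pow_le_pow_left₀ (by positivity) (by linarith [Real.add_one_le_exp (c * Δ)]) k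
    _ = Real.exp (c * (k * Δ)) := by rw [← Real.exp_nat_mul]; ring_nf
    _ ≤ _ := by gcongr

lemma sq_qA_phiE_sub_le {f : (Fin d → ℝ) → ℝ} {T Mf Mμ Mσ : ℝ} (hT : 0 ≤ T) (hMf0 : 0 ≤ Mf)
    (hMμ0 : 0 ≤ Mμ) (hMσ0 : 0 ≤ Mσ) (hf : ∀ u v, (f u - f v) ^ 2 ≤ Mf * sqDist u v)
    (hμ : ∀ u v, ∑ k, (μc u k - μc v k) ^ 2 ≤ Mμ * sqDist u v)
    (hσ : ∀ u v, ∑ k, ∑ i, (σc u k i - σc v k i) ^ 2 ≤ Mσ * sqDist u v)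
    {J k : ℕ} (hJ : 1 ≤ J) (hk : k ≤ J) (u v : Fin d → ℝ) :
    (qA (PhiE μc σc (T / J)) f k u - qA (PhiE μc σc (T / J)) f k v) ^ 2
      ≤ Mf * Real.exp ((1 + (1 + T) * Mμ + Mσ) * T) * sqDist u v := by
  set Δ := T / J
  have hJ' : (1 : ℝ) ≤ J := by exact_mod_cast hJ
  have hΔ : 0 ≤ Δ := by positivity
  have hΔT : Δ ≤ T := div_le_self hT hJ'
  have hkΔ : k * Δ ≤ T :=
    calc k * Δ ≤ J * Δ := by gcongr
      _ = T := mul_div_cancel₀ T (by positivity)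
  have hc : 0 ≤ 1 + (1 + T) * Mμ + Mσ := by positivity
  have hstep : ∀ u v, ∑ b : Fin m → Bool,
      sqDist (PhiE μc σc Δ u fun i => pm (b i)) (PhiE μc σc Δ v fun i => pm (b i))
        ≤ 2 ^ m * ((1 + (1 + (1 + T) * Mμ + Mσ) * Δ) * sqDist u v) := fun u v =>
    (sum_sqDist_phiE_le hΔ hμ hσ u v).trans (by gcongr; exact sqDist_nonneg u v)
  calc _ ≤ Mf * (1 + (1 + (1 + T) * Mμ + Mσ) * Δ) ^ k * sqDist u v :=
        sq_qA_sub_le hMf0 (by positivity) hstep hf k u v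
    _ ≤ _ := by
        gcongr
        · exact sqDist_nonneg u v
        · exact one_add_mul_pow_le_exp hc hΔ hkΔ

end Euler

lemma abs_aA_le {d m : ℕ} {Φ : (Fin d → ℝ) → (Fin m → ℝ) → Fin d → ℝ}
    {f : (Fin d → ℝ) → ℝ} {k : ℕ} {S : Finset (Fin m)} (hS : S.Nonempty) {x : Fin d → ℝ}
    (w ε : ℝ) (h : ∀ b : Fin m → Bool, |qA Φ f k (Φ x fun i => pm (b i)) - w| ≤ ε) :
    |aA Φ f k S x| ≤ ε := by
  have hcentre : aA Φ f k S x = ((2 : ℝ) ^ m)⁻¹ * ∑ b : Fin m → Bool,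
      (∏ i ∈ S, pm (b i)) * (qA Φ f k (Φ x fun i => pm (b i)) - w) := by
    simp only [aA, mul_sub, Finset.sum_sub_distrib, ← Finset.sum_mul,
      sum_prod_pm_eq_zero hS, zero_mul, sub_zero]
  have hterm : ∀ b : Fin m → Bool,
      |(∏ i ∈ S, pm (b i)) * (qA Φ f k (Φ x fun i => pm (b i)) - w)| ≤ ε := fun b => by
    simpa [abs_mul, Finset.abs_prod, abs_pm] using h b
  rw [hcentre, abs_mul, abs_of_pos (by positivity)]
  calc _ ≤ ((2 : ℝ) ^ m)⁻¹ * ∑ _b : Fin m → Bool, ε := by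
        gcongr
        exact (Finset.abs_sum_le_sum_abs _ _).trans (Finset.sum_le_sum fun b _ => hterm b)
    _ = ε := by simp

/-- If all `σ^{ki}` are bounded and `f`, `μ^k`, `σ^{ki}` are `C¹`
with bounded derivatives, then there is `A > 0`, independent of `J`, with
`sup_x |a_{j,S}(x)| ≤ A √Δ` for all `J`, `j ∈ {1,…,J}` and nonempty `S`. -/
theorem stmt7
    {d m : ℕ} (T : ℝ) (hT : 0 < T)
    (μc : (Fin d → ℝ) → Fin d → ℝ) (σc : (Fin d → ℝ) → Fin d → Fin m → ℝ)
    (f : (Fin d → ℝ) → ℝ)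
    (hσbdd : ∃ C, ∀ x k i, |σc x k i| ≤ C)
    (hf : HasBddDerivs 1 f)
    (hμ : ∀ k, HasBddDerivs 1 fun x => μc x k)
    (hσ : ∀ k i, HasBddDerivs 1 fun x => σc x k i) :
    ∃ A > (0 : ℝ), ∀ J : ℕ, 1 ≤ J → ∀ j, 1 ≤ j → j ≤ J →
      ∀ S : Finset (Fin m), S.Nonempty → ∀ x : Fin d → ℝ,
        |aA (PhiE μc σc (T / J)) f (J - j) S x| ≤ A * Real.sqrt (T / J) := by
  obtain ⟨C, hC⟩ := hσbdd
  obtain ⟨Mf, hMf0, hMf⟩ := hf.exists_sq_sub_le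
  obtain ⟨Mμ, hMμ0, hMμ⟩ := exists_sum_sq_sub_le hμ
  obtain ⟨Mσ, hMσ0, hMσ⟩ := exists_sum_sq_sub_le (fun p : Fin d × Fin m => hσ p.1 p.2)
  simp only [Fintype.sum_prod_type] at hMσ
  set L := Mf * Real.exp ((1 + (1 + T) * Mμ + Mσ) * T)
  refine ⟨√(L * (d * (m * C) ^ 2)) + 1, by positivity, fun J hJ j _ _ S hS x => ?_⟩
  have hΔ : 0 ≤ T / J := by positivity
  set z : Fin d → ℝ := fun k => x k + μc x k * (T / J)
  refine abs_aA_le hS (qA (PhiE μc σc (T / J)) f (J - j) z) _ fun b => ?_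
  have hq := sq_qA_phiE_sub_le hT.le hMf0 hMμ0 hMσ0 hMf hMμ hMσ hJ (Nat.sub_le J j)
    (PhiE μc σc (T / J) x fun i => pm (b i)) z
  calc _ ≤ √(L * sqDist (PhiE μc σc (T / J) x fun i => pm (b i)) z) := Real.abs_le_sqrt hq
    _ ≤ √(L * (T / J * (d * (m * C) ^ 2))) := by gcongr; exact sqDist_phiE_le hΔ hC x b
    _ = √(L * (d * (m * C) ^ 2)) * √(T / J) := by rw [← Real.sqrt_mul' _ hΔ]; ring_nf
    _ ≤ (√(L * (d * (m * C) ^ 2)) + 1) * √(T / J) := by gcongr; linarith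

end
end
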